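/- The bilinear antisymmetric bracket on ℝ⁷ determined by [e₁,e₂] = e₅, [e₁,e₃] = e₆ (all other brackets of basis vectors being zero) satisfies the Jacobi identity, so it defines a Lie algebra 𝔫₂, and the diagonal linear map D : ℝ⁷ → ℝ⁷ with D(e₁) = e₁, D(e₂) = (3/2)e₂, D(e₃) = (3/2)e₃, D(e₄) = 2e₄, D(e₅) = (5/2)e₅, D(e₆) = (5/2)e₆, D(e₇) = 2e₇ is a derivation of 𝔫₂, i.e. D[x,y] = [Dx,y] + [x,Dy] for all x, y ∈ ℝ⁷. -/

import Mathlib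

/-- The bilinear antisymmetric bracket of 𝔫₂: [e₁,e₂] = e₅, [e₁,e₃] = e₆
(0-based: [e₀,e₁] = e₄, [e₀,e₂] = e₅), all other basis brackets zero,
extended bilinearly. -/
def brN2 (x y : Fin 7 → ℝ) : Fin 7 → ℝ :=
  ![0, 0, 0, 0, x 0 * y 1 - x 1 * y 0, x 0 * y 2 - x 2 * y 0, 0]

/-- The diagonal linear map D with D(e₁) = e₁, D(e₂) = (3/2)e₂,
D(e₃) = (3/2)e₃, D(e₄) = 2e₄, D(e₅) = (5/2)e₅, D(e₆) = (5/2)e₆,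
D(e₇) = 2e₇. -/
noncomputable def DN2 (x : Fin 7 → ℝ) : Fin 7 → ℝ :=
  fun i => ![1, 3 / 2, 3 / 2, 2, 5 / 2, 5 / 2, 2] i * x i

/-- The bracket only reads the coordinates on e₁, e₂, e₃ and takes values in span{e₅, e₆}, so
𝔫₂ is 2-step nilpotent and each term of the Jacobi identity vanishes on its own. -/
theorem brN2_brN2 (x y z : Fin 7 → ℝ) : brN2 (brN2 x y) z = 0 := by
  funext i
  fin_cases i <;> simp [brN2]

/-- The eigenvalues of D are additive along the bracket: 5/2 = 1 + 3/2 on both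
[e₁,e₂] = e₅ and [e₁,e₃] = e₆. -/
theorem DN2_brN2 (x y : Fin 7 → ℝ) :
    DN2 (brN2 x y) = brN2 (DN2 x) y + brN2 x (DN2 y) := by
  funext i
  fin_cases i <;> simp only [DN2, brN2, Pi.add_apply, Matrix.cons_val, Matrix.cons_val_zero,
    Matrix.cons_val_one, Fin.zero_eta, Fin.mk_one, Fin.reduceFinMk] <;> ring

/-- the bracket of 𝔫₂ satisfies the Jacobi identity (so 𝔫₂ is a
Lie algebra) and D is a derivation of 𝔫₂. -/
theorem N2_jacobi_and_derivation :
    (∀ x y z : Fin 7 → ℝ,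
      brN2 (brN2 x y) z + brN2 (brN2 y z) x + brN2 (brN2 z x) y = 0) ∧
    (∀ x y : Fin 7 → ℝ, DN2 (brN2 x y) = brN2 (DN2 x) y + brN2 x (DN2 y)) :=
  ⟨fun x y z => by simp only [brN2_brN2, add_zero], DN2_brN2⟩
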